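/- arXiv:1004.0197 — 2 statements merged into one kernel-verified Lean document; each statement's English description precedes it below -/
import Mathlib

section
/- For every integer m with |m| ≥ 2, there is no injective group homomorphism from the Baumslag–Solitar group BS(1, m) — the group presented by two generators a, b subject to the single relation b·a·b⁻¹ = a^m — into the group G₁. -/
def θ₀ : (ℤ × ℤ) →+ (ℤ × ℤ) where
  toFun p := (5 * p.1 + 2 * p.2, -p.1)
  map_zero' := by simp
  map_add' p q := by
    simp only [Prod.fst_add, Prod.snd_add, Prod.mk_add_mk, Prod.mk.injEq]
    constructor <;> ring

/-- The multiplicative version of `θ₀`. -/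
def Θ₁ : Multiplicative (ℤ × ℤ) →* Multiplicative (ℤ × ℤ) :=
  AddMonoidHom.toMultiplicative θ₀

theorem Θ₁_injective : Function.Injective Θ₁ := by
  intro p q h
  have h' : θ₀ p.toAdd = θ₀ q.toAdd := h
  have : p.toAdd = q.toAdd := by
    have h1 := congrArg Prod.fst h'
    have h2 := congrArg Prod.snd h'
    simp only [θ₀, AddMonoidHom.coe_mk, ZeroHom.coe_mk] at h1 h2
    ext <;> omega
  exact this

/-- The isomorphism from the base group onto the range of `Θ₁`. -/
noncomputable def φ₁ : (⊤ : Subgroup (Multiplicative (ℤ × ℤ))) ≃* Θ₁.range :=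
  Subgroup.topEquiv.trans (MonoidHom.ofInjective Θ₁_injective)

/-- The ascending HNN extension of `ℤ × ℤ` along `θ₀`. -/
abbrev G₁ := HNNExtension (Multiplicative (ℤ × ℤ)) ⊤ Θ₁.range φ₁


/-- The Baumslag–Solitar group `BS(1, m)`: the group presented by two generators
`a = of 0`, `b = of 1` subject to the single relation `b * a * b⁻¹ = a ^ m`. -/
def BS (m : ℤ) : Type :=
  PresentedGroup ({FreeGroup.of 1 * FreeGroup.of 0 * (FreeGroup.of 1)⁻¹ *
    (FreeGroup.of 0) ^ (-m)} : Set (FreeGroup (Fin 2)))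

noncomputable instance (m : ℤ) : Group (BS m) := by
  unfold BS; infer_instance

/-!
An ascending HNN extension of `G` along `θ` embeds in `K ⋊ ℤ` as soon as `θ` extends to an
automorphism of a group `K ⊇ G`: every element has the form `t⁻ᵃ g tᵇ`, and such an element maps to
`1` only if `a = b` and `g = 1`. The matrix of `θ₀` has characteristic polynomial `X² - 5X + 2`, with
eigenvalues `lam = (5 + √17)/2 > 1` and `mu = (5 - √17)/2 ∈ (0, 1)`; in eigencoordinates `G₁` embeds
in `ℝ² ⋊ ℤ`, the generator of `ℤ` acting by `diag(lam, mu)`.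
In that group `y x y⁻¹ = xᵐ` with `m ≠ 1` forces `x ∈ ℝ²` and `diag(lamˡ, muˡ) x = m x`. No `lamˡ` or
`muˡ` is an integer `m` with `|m| ≥ 2`: positive powers of `lam` and of `mu⁻¹ = lam / 2` are
irrational, all other powers lie in `(0, 1]`. So an embedding of `BS(1, m)` would kill `a`, which is
nontrivial since it acts on `ℚ` as `x ↦ x + 1` when `b` acts as `x ↦ m x`.
-/

open Multiplicative Function

namespace HNNExtension

variable {G : Type*} [Group G] {θ : G →* G} {φ : (⊤ : Subgroup G) ≃* θ.range}

theorem t_mul_of_of_range (hφ : ∀ a, (φ a : G) = θ a) (g : G) :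
    (t : HNNExtension G ⊤ θ.range φ) * of g = of (θ g) * t := by
  simpa [hφ] using t_mul_of (φ := φ) ⟨g, trivial⟩

theorem t_pow_mul_of_of_range (hφ : ∀ a, (φ a : G) = θ a) (k : ℕ) (g : G) :
    (t : HNNExtension G ⊤ θ.range φ) ^ k * of g = of (θ^[k] g) * t ^ k := by
  induction k generalizing g with
  | zero => simp
  | succ k ih =>
    rw [pow_succ, mul_assoc, t_mul_of_of_range hφ, ← mul_assoc, ih, iterate_succ_apply, mul_assoc]

theorem exists_eq_inv_t_pow_mul_of_mul_t_pow (hφ : ∀ a, (φ a : G) = θ a)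
    (x : HNNExtension G ⊤ θ.range φ) :
    ∃ (a b : ℕ) (g : G), x = (t ^ a)⁻¹ * of g * t ^ b := by
  let NF (y : HNNExtension G ⊤ θ.range φ) : Prop :=
    ∃ (a b : ℕ) (g : G), y = (t ^ a)⁻¹ * of g * t ^ b
  have of_mul (h : G) (y) : NF y → NF (of h * y) := by
    rintro ⟨a, b, g, rfl⟩
    refine ⟨a, b, θ^[a] h * g, ?_⟩
    calc of h * ((t ^ a)⁻¹ * of g * t ^ b)
        = (t ^ a)⁻¹ * (t ^ a * of h) * (t ^ a)⁻¹ * of g * t ^ b := by group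
      _ = _ := by rw [t_pow_mul_of_of_range hφ, map_mul]; group
  have t_mul (y) : NF y → NF (t * y) := by
    rintro ⟨_ | a, b, g, rfl⟩
    · exact ⟨0, b + 1, θ g, by simp [pow_succ', ← mul_assoc, t_mul_of_of_range hφ]⟩
    · exact ⟨a, b, g, by group⟩
  have t_inv_mul (y) : NF y → NF (t⁻¹ * y) := by
    rintro ⟨a, b, g, rfl⟩
    exact ⟨a + 1, b, g, by group⟩
  suffices ∀ y, NF y → NF (x * y) ∧ NF (x⁻¹ * y) by
    simpa using (this 1 ⟨0, 0, 1, by simp⟩).1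
  induction x using induction_on with
  | of h => exact fun y hy => ⟨of_mul h y hy, by simpa using of_mul h⁻¹ y hy⟩
  | t => exact fun y hy => ⟨t_mul y hy, t_inv_mul y hy⟩
  | mul x₁ x₂ h₁ h₂ =>
    exact fun y hy => ⟨by simpa [mul_assoc] using (h₁ _ (h₂ y hy).1).1,
      by simpa [mul_assoc] using (h₂ _ (h₁ y hy).2).2⟩
  | inv x h => exact fun y hy => ⟨(h y hy).2, by simpa using (h y hy).1⟩

variable {K : Type*} [Group K] {ρ : Multiplicative ℤ →* MulAut K}

def toSemidirectProduct (hφ : ∀ a, (φ a : G) = θ a) (ι : G →* K)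
    (hι : ∀ g, ι (θ g) = ρ (ofAdd 1) (ι g)) :
    HNNExtension G ⊤ θ.range φ →* K ⋊[ρ] Multiplicative ℤ :=
  lift (SemidirectProduct.inl.comp ι) (SemidirectProduct.inr (ofAdd 1)) fun a => by
    rw [MonoidHom.comp_apply, MonoidHom.comp_apply, hφ, hι, SemidirectProduct.inl_aut, map_inv,
      inv_mul_cancel_right]

theorem toSemidirectProduct_injective (hφ : ∀ a, (φ a : G) = θ a) {ι : G →* K}
    (hι : Injective ι) (hιθ : ∀ g, ι (θ g) = ρ (ofAdd 1) (ι g)) :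
    Injective (toSemidirectProduct hφ ι hιθ) := by
  refine (injective_iff_map_eq_one _).2 fun x hx => ?_
  obtain ⟨a, b, g, rfl⟩ := exists_eq_inv_t_pow_mul_of_mul_t_pow hφ x
  simp only [toSemidirectProduct, map_mul, map_inv, map_pow, lift_t, lift_of,
    MonoidHom.comp_apply] at hx
  rw [← map_pow SemidirectProduct.inr, ← map_pow SemidirectProduct.inr] at hx
  obtain rfl : a = b := by
    have := congrArg (toAdd ∘ SemidirectProduct.rightHom) hx
    simp only [comp_apply, map_mul, map_inv, SemidirectProduct.rightHom_inl,
      SemidirectProduct.rightHom_inr, mul_one, map_one, toAdd_mul, toAdd_inv, toAdd_pow, toAdd_ofAdd,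
      toAdd_one, nsmul_eq_mul] at this
    omega
  rw [← map_inv, ← SemidirectProduct.inl_aut_inv, map_eq_one_iff _ SemidirectProduct.inl_injective,
    map_eq_one_iff _ (MulEquiv.injective _), map_eq_one_iff _ hι] at hx
  simp [hx]

end HNNExtension

namespace SemidirectProduct

variable {N : Type*} [CommGroup N]

theorem mul_inl_mul_inv {G : Type*} [Group G] {ρ : G →* MulAut N} (y : N ⋊[ρ] G) (n : N) :
    y * inl n * y⁻¹ = inl (ρ y.right n) := by
  ext <;> simp [mul_comm]

theorem exists_eq_inl_of_mul_mul_inv_eq_zpow {ρ : Multiplicative ℤ →* MulAut N}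
    {x y : N ⋊[ρ] Multiplicative ℤ} {m : ℤ} (hm : m ≠ 1) (h : y * x * y⁻¹ = x ^ m) :
    ∃ n, x = inl n ∧ ρ y.right n = n ^ m := by
  have hright : x.right = 1 := by
    have := congrArg (toAdd ∘ rightHom) h
    simp only [comp_apply, map_mul, map_inv, map_zpow, mul_inv_cancel_comm, toAdd_zpow] at this
    rw [rightHom_eq_right, smul_eq_mul] at this
    rw [← toAdd_eq_zero]
    exact (mul_eq_zero.1 (by linarith : (m - 1) * toAdd x.right = 0)).resolve_left (sub_ne_zero.2 hm)
  have hx : x = inl x.left := by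
    rw [← inl_left_mul_inr_right x, hright, map_one, mul_one, left_inl]
  rw [hx, mul_inl_mul_inv, ← map_zpow] at h
  exact ⟨x.left, hx, inl_injective h⟩

end SemidirectProduct

def mulLeftZPow {R : Type*} [CommRing R] (u : Rˣ) : Multiplicative ℤ →* MulAut (Multiplicative R) :=
  (MulAutMultiplicative R).symm.toMonoidHom.comp (AddAut.mulLeft.comp (zpowersHom Rˣ u))

theorem mulLeftZPow_apply {R : Type*} [CommRing R] (u : Rˣ) (n : Multiplicative ℤ)
    (v : Multiplicative R) : mulLeftZPow u n v = ofAdd (((u ^ n.toAdd : Rˣ) : R) * v.toAdd) :=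
  rfl

theorem ne_intCast_of_mem_Ioc {r : ℝ} (hr : r ∈ Set.Ioc 0 1) {m : ℤ} (hm : 2 ≤ |m|) : r ≠ m := by
  rintro rfl
  have : (2 : ℝ) ≤ |(m : ℝ)| := by exact_mod_cast hm
  rw [abs_of_pos hr.1] at this
  linarith [hr.2]

theorem exists_pow_succ_eq_add_mul_sqrt (d : ℕ) {p q : ℚ} (hp : 0 < p) (hq : 0 < q) (k : ℕ) :
    ∃ p' q' : ℚ, 0 < p' ∧ 0 < q' ∧ ((p : ℝ) + q * √d) ^ (k + 1) = p' + q' * √d := by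
  induction k with
  | zero => exact ⟨p, q, hp, hq, pow_one _⟩
  | succ k ih =>
    obtain ⟨p', q', hp', hq', h⟩ := ih
    refine ⟨p' * p + d * q' * q, p' * q + q' * p, by positivity, by positivity, ?_⟩
    rw [pow_succ, h]
    push_cast
    linear_combination (q' * q : ℝ) * Real.sq_sqrt (Nat.cast_nonneg d)

noncomputable def lam : ℝ := (5 + √17) / 2

noncomputable def mu : ℝ := (5 - √17) / 2

theorem four_lt_sqrt_seventeen : 4 < √17 := by
  rw [Real.lt_sqrt] <;> norm_num

theorem sqrt_seventeen_lt_five : √17 < 5 := by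
  rw [Real.sqrt_lt'] <;> norm_num

theorem one_lt_lam : 1 < lam := by
  unfold lam; linarith [four_lt_sqrt_seventeen]

theorem mu_pos : 0 < mu := by
  unfold mu; linarith [sqrt_seventeen_lt_five]

theorem mu_lt_lam : mu < lam := by
  unfold lam mu; linarith [four_lt_sqrt_seventeen]

theorem mu_le_one : mu ≤ 1 := by
  unfold mu; linarith [four_lt_sqrt_seventeen]

theorem lam_add_mu : lam + mu = 5 := by
  unfold lam mu; ring

theorem lam_mul_mu : lam * mu = 2 := by
  unfold lam mu; linear_combination (-1 / 4 : ℝ) * Real.sq_sqrt (show (0 : ℝ) ≤ 17 by norm_num)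

theorem lam_pow_ne_intCast {k : ℕ} (hk : k ≠ 0) (n : ℤ) : lam ^ k ≠ n := by
  obtain ⟨k, rfl⟩ := Nat.exists_eq_succ_of_ne_zero hk
  obtain ⟨p, q, -, hq, h⟩ := exists_pow_succ_eq_add_mul_sqrt 17 (p := 5 / 2) (q := 1 / 2)
    (by norm_num) (by norm_num) k
  have hirr : Irrational (p + q * √(17 : ℕ)) :=
    ((by norm_num : Nat.Prime 17).irrational_sqrt.ratCast_mul hq.ne').ratCast_add p
  have hlam : lam = ((5 / 2 : ℚ) : ℝ) + (1 / 2 : ℚ) * √(17 : ℕ) := by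
    unfold lam; push_cast; ring
  rw [hlam, h]
  exact fun heq => Int.not_irrational n (heq ▸ hirr)

theorem lam_zpow_ne_intCast {m : ℤ} (hm : 2 ≤ |m|) (l : ℤ) : lam ^ l ≠ m := by
  rcases le_or_gt l 0 with hl | hl
  · exact ne_intCast_of_mem_Ioc ⟨zpow_pos (by linarith [one_lt_lam]) l,
      zpow_le_one_of_nonpos₀ one_lt_lam.le hl⟩ hm
  · lift l to ℕ using hl.le
    exact_mod_cast lam_pow_ne_intCast (by omega) m

theorem mu_zpow_ne_intCast {m : ℤ} (hm : 2 ≤ |m|) (l : ℤ) : mu ^ l ≠ m := by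
  rcases le_or_gt 0 l with hl | hl
  · exact ne_intCast_of_mem_Ioc ⟨zpow_pos mu_pos l, zpow_le_one₀ mu_pos mu_le_one hl⟩ hm
  · obtain ⟨k, rfl⟩ : ∃ k : ℕ, l = -k := ⟨l.natAbs, by omega⟩
    intro h
    have hmu : mu⁻¹ = lam / 2 := inv_eq_of_mul_eq_one_right (by linear_combination lam_mul_mu / 2)
    rw [zpow_neg, ← inv_zpow, hmu, zpow_natCast, div_pow, div_eq_iff (by positivity)] at h
    exact lam_pow_ne_intCast (k := k) (by omega) (m * 2 ^ k) (by push_cast; exact h)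

noncomputable def eigenUnit : (ℝ × ℝ)ˣ :=
  MulEquiv.prodUnits.symm (Units.mk0 lam (by linarith [one_lt_lam]), Units.mk0 mu mu_pos.ne')

theorem val_eigenUnit_zpow (l : ℤ) :
    ((eigenUnit ^ l : (ℝ × ℝ)ˣ) : ℝ × ℝ) = (lam ^ l, mu ^ l) := by
  rw [eigenUnit, ← map_zpow]
  simp [MulEquiv.prodUnits, Units.val_zpow_eq_zpow_val]

theorem eq_one_of_mul_mul_inv_eq_zpow {m : ℤ} (hm : 2 ≤ |m|)
    {x y : Multiplicative (ℝ × ℝ) ⋊[mulLeftZPow eigenUnit] Multiplicative ℤ}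
    (h : y * x * y⁻¹ = x ^ m) : x = 1 := by
  have hm1 : m ≠ 1 := by rintro rfl; norm_num at hm
  obtain ⟨v, rfl, hv⟩ := SemidirectProduct.exists_eq_inl_of_mul_mul_inv_eq_zpow hm1 h
  have hv' := congrArg toAdd hv
  simp only [mulLeftZPow_apply, val_eigenUnit_zpow, toAdd_ofAdd, toAdd_zpow, Prod.ext_iff,
    Prod.fst_mul, Prod.snd_mul, zsmul_eq_mul] at hv'
  have h1 : v.toAdd.1 = 0 := by
    by_contra hne; exact lam_zpow_ne_intCast hm _ (mul_right_cancel₀ hne hv'.1)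
  have h2 : v.toAdd.2 = 0 := by
    by_contra hne; exact mu_zpow_ne_intCast hm _ (mul_right_cancel₀ hne hv'.2)
  rw [← map_one SemidirectProduct.inl]
  congr
  exact toAdd_eq_zero.1 (Prod.ext h1 h2)

noncomputable def eigenCoords : ℤ × ℤ →+ ℝ × ℝ where
  toFun p := (p.1 + mu * p.2, p.1 + lam * p.2)
  map_zero' := by simp
  map_add' p q := by ext <;> simp <;> ring

theorem eigenCoords_injective : Injective eigenCoords := by
  refine (injective_iff_map_eq_zero _).2 fun p hp => ?_
  simp only [eigenCoords, AddMonoidHom.coe_mk, ZeroHom.coe_mk, Prod.ext_iff, Prod.fst_zero,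
    Prod.snd_zero] at hp
  have h2 : (p.2 : ℝ) = 0 := by
    have : (lam - mu) * p.2 = 0 := by linear_combination hp.2 - hp.1
    exact (mul_eq_zero.1 this).resolve_left (sub_ne_zero.2 mu_lt_lam.ne')
  have h1 : (p.1 : ℝ) = 0 := by simpa [h2] using hp.1
  exact Prod.ext (by exact_mod_cast h1) (by exact_mod_cast h2)

theorem eigenCoords_θ₀ (p : ℤ × ℤ) : eigenCoords (θ₀ p) = (lam, mu) * eigenCoords p := by
  simp only [eigenCoords, θ₀, AddMonoidHom.coe_mk, ZeroHom.coe_mk, Prod.ext_iff, Prod.mk_mul_mk]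
  push_cast
  constructor
  · linear_combination (-(p.1 : ℝ)) * lam_add_mu - (p.2 : ℝ) * lam_mul_mu
  · linear_combination (-(p.1 : ℝ)) * lam_add_mu - (p.2 : ℝ) * lam_mul_mu

noncomputable def G₁.toSemidirectProduct :
    G₁ →* Multiplicative (ℝ × ℝ) ⋊[mulLeftZPow eigenUnit] Multiplicative ℤ :=
  HNNExtension.toSemidirectProduct (fun _ => rfl) (AddMonoidHom.toMultiplicative eigenCoords)
    fun g => by
      change ofAdd (eigenCoords (θ₀ g.toAdd)) =
        ofAdd (((eigenUnit ^ (1 : ℤ) : (ℝ × ℝ)ˣ) : ℝ × ℝ) * eigenCoords g.toAdd)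
      rw [eigenCoords_θ₀, val_eigenUnit_zpow, zpow_one, zpow_one]

theorem G₁.toSemidirectProduct_injective : Injective G₁.toSemidirectProduct :=
  HNNExtension.toSemidirectProduct_injective _ eigenCoords_injective _

namespace BS

def a (m : ℤ) : BS m := PresentedGroup.of 0

def b (m : ℤ) : BS m := PresentedGroup.of 1

theorem b_mul_a_mul_b_inv (m : ℤ) : b m * a m * (b m)⁻¹ = a m ^ m := by
  have := PresentedGroup.one_of_mem (Set.mem_singleton
    (FreeGroup.of (1 : Fin 2) * FreeGroup.of 0 * (FreeGroup.of 1)⁻¹ * FreeGroup.of 0 ^ (-m)))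
  rw [map_mul, map_mul, map_mul, map_inv, map_zpow] at this
  rw [← mul_inv_eq_one, ← zpow_neg]
  exact this

theorem a_ne_one {m : ℤ} (hm : m ≠ 0) : a m ≠ 1 := by
  let u : ℚˣ := Units.mk0 m (Int.cast_ne_zero.2 hm)
  let gen : Fin 2 → Multiplicative ℚ ⋊[mulLeftZPow u] Multiplicative ℤ :=
    ![SemidirectProduct.inl (ofAdd 1), SemidirectProduct.inr (ofAdd 1)]
  have hrel : ∀ r ∈ ({FreeGroup.of 1 * FreeGroup.of 0 * (FreeGroup.of 1)⁻¹ *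
      (FreeGroup.of 0) ^ (-m)} : Set (FreeGroup (Fin 2))), FreeGroup.lift gen r = 1 := by
    rintro _ rfl
    simp only [map_mul, map_inv, map_zpow, FreeGroup.lift_apply_of, gen, Matrix.cons_val_zero,
      Matrix.cons_val_one]
    rw [← map_inv, ← SemidirectProduct.inl_aut, ← map_zpow, ← map_mul,
      map_eq_one_iff _ SemidirectProduct.inl_injective, ← toAdd_eq_zero]
    simp [mulLeftZPow_apply, u]
  intro h
  have h0 : PresentedGroup.toGroup hrel (a m) = 1 := by rw [h]; exact map_one _
  have := congrArg (fun x => toAdd x.left) ((PresentedGroup.toGroup.of hrel).symm.trans h0)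
  simp [gen] at this

end BS

/-- For every integer `m` with `|m| ≥ 2` there is no injective group homomorphism
from `BS(1, m)` into `G₁`. -/
theorem G₁_no_BS_subgroup (m : ℤ) (hm : 2 ≤ |m|) :
    ¬ ∃ f : BS m →* G₁, Function.Injective f := by
  rintro ⟨f, hf⟩
  let ψ := G₁.toSemidirectProduct.comp f
  have hψ : Injective ψ := G₁.toSemidirectProduct_injective.comp hf
  have hrel := congrArg ψ (BS.b_mul_a_mul_b_inv m)
  rw [map_mul, map_mul, map_inv, map_zpow] at hrel
  have ha : ψ (BS.a m) = 1 := eq_one_of_mul_mul_inv_eq_zpow hm hrel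
  exact BS.a_ne_one (by rintro rfl; simp at hm) (hψ (ha.trans ψ.map_one.symm))
end

section
/- Let B be a finitely generated additive subgroup of ℤ →₀ ℤ with B ≠ ⊥. Then for every natural number k ≥ 1 and every integer i, the image of B under L^k is not contained in the image of B under S^i, and the image of B under S^i is not contained in the image of B under L^k. -/
/-!
The width of a nonzero `f : ℤ →₀ ℤ` is the length of the smallest interval containing its
support. Shifts preserve width, while `L ^ k` raises it by exactly `k`, since the extreme
coefficients of `f` reappear unchanged at the ends of the support of `L f`.

If `L ^ k B ≤ S ^ i B`, pick `f ≠ 0` in `B` of maximal width; maximal widths exist because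
the supports of all elements of a finitely generated `B` lie in one finite set. Then
`L ^ k f = S ^ i c` with `c ∈ B` of width `width f + k`, a contradiction. If `S ^ i B ≤ L ^ k B`,
pick `f ≠ 0` in `B` of minimal width; then `S ^ i f = L ^ k c` with `c ∈ B` of width
`width f - k`.
-/

/-- The shift automorphism `S` of `ℤ →₀ ℤ`, with `(S f) j = f (j - 1)`. -/
def S : AddAut (ℤ →₀ ℤ) := (Finsupp.domCongr (Equiv.addRight (1 : ℤ)) : (ℤ →₀ ℤ) ≃+ (ℤ →₀ ℤ))

theorem S_apply (f : ℤ →₀ ℤ) (j : ℤ) : S f j = f (j - 1) := by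
  simp [S, Finsupp.domCongr_apply, sub_eq_add_neg]

/-- The additive endomorphism `L f = f + S f` of `ℤ →₀ ℤ`. -/
noncomputable def L : AddMonoid.End (ℤ →₀ ℤ) :=
  AddMonoidHom.mk' (fun f => f + S f) (by intro a b; simp only [map_add]; abel)

theorem L_def (f : ℤ →₀ ℤ) : L f = f + S f := rfl

-- `sSup ∅ = sInf ∅ = 0` in `ℤ`, so `width 0 = 0`.
noncomputable def width {M : Type*} [Zero M] (f : ℤ →₀ M) : ℤ :=
  sSup (f.support : Set ℤ) - sInf (f.support : Set ℤ)

section width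

variable {M : Type*} [Zero M] {f : ℤ →₀ M} {m n : ℤ}

lemma exists_isLeast_isGreatest_support (hf : f ≠ 0) :
    ∃ m n, IsLeast (f.support : Set ℤ) m ∧ IsGreatest (f.support : Set ℤ) n := by
  have hne := Finsupp.support_nonempty_iff.mpr hf
  exact ⟨_, _, f.support.isLeast_min' hne, f.support.isGreatest_max' hne⟩

lemma width_eq (hm : IsLeast (f.support : Set ℤ) m) (hn : IsGreatest (f.support : Set ℤ) n) :
    width f = n - m := by
  rw [width, hn.csSup_eq, hm.csInf_eq]

lemma width_nonneg (f : ℤ →₀ M) : 0 ≤ width f := by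
  rcases eq_or_ne f 0 with rfl | hf
  · simp [width]
  obtain ⟨m, n, hm, hn⟩ := exists_isLeast_isGreatest_support hf
  rw [width_eq hm hn, sub_nonneg]
  exact hm.2 hn.1

lemma width_le_of_support_subset {T : Finset ℤ} (hf : f ≠ 0) (hT : f.support ⊆ T) :
    width f ≤ sSup (T : Set ℤ) - sInf (T : Set ℤ) := by
  have hne : (f.support : Set ℤ).Nonempty := by simpa using hf
  have hT' : (f.support : Set ℤ) ⊆ T := by exact_mod_cast hT
  exact sub_le_sub (csSup_le_csSup T.bddAbove hne hT') (csInf_le_csInf T.bddBelow hne hT')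

end width

lemma exists_width_le_of_fg {M : Type*} [AddCommGroup M] {B : AddSubgroup (ℤ →₀ M)} (hB : B.FG) :
    ∃ N, ∀ f ∈ B, f ≠ 0 → width f ≤ N := by
  classical
  obtain ⟨s, rfl⟩ := hB
  set T := s.biUnion Finsupp.support
  have hle : AddSubgroup.closure (s : Set (ℤ →₀ M)) ≤
      (Finsupp.supported M ℤ (T : Set ℤ)).toAddSubgroup := by
    refine (AddSubgroup.closure_le _).mpr fun g hg => ?_
    rw [SetLike.mem_coe, Submodule.mem_toAddSubgroup, Finsupp.mem_supported]
    exact_mod_cast Finset.subset_biUnion_of_mem Finsupp.support hg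
  refine ⟨sSup (T : Set ℤ) - sInf (T : Set ℤ), fun f hf hf0 => width_le_of_support_subset hf0 ?_⟩
  exact_mod_cast (Finsupp.mem_supported ℤ f).mp (hle hf)

lemma exists_ne_zero_map_eq_of_map_le {G H : Type*} [AddGroup G] [AddGroup H]
    {B : AddSubgroup G} {φ ψ : G →+ H} (h : B.map φ ≤ B.map ψ) {f : G} (hf : f ∈ B)
    (hφf : φ f ≠ 0) : ∃ c ∈ B, c ≠ 0 ∧ ψ c = φ f := by
  obtain ⟨c, hc, hcf⟩ := h (AddSubgroup.mem_map_of_mem φ hf)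
  exact ⟨c, hc, by rintro rfl; exact hφf (by rw [← hcf, map_zero]), hcf⟩

lemma exists_mem_ne_zero_width_max_of_fg {M : Type*} [AddCommGroup M] {B : AddSubgroup (ℤ →₀ M)}
    (hFG : B.FG) (hB : B ≠ ⊥) : ∃ f ∈ B, f ≠ 0 ∧ ∀ g ∈ B, g ≠ 0 → width g ≤ width f := by
  obtain ⟨N, hN⟩ := exists_width_le_of_fg hFG
  obtain ⟨f₀, hf₀B, hf₀⟩ := B.bot_or_exists_ne_zero.resolve_left hB
  obtain ⟨_, ⟨f, hfB, hf, rfl⟩, hmax⟩ :=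
    Int.exists_greatest_of_bdd (P := fun w => ∃ f ∈ B, f ≠ 0 ∧ width f = w)
      ⟨N, by rintro _ ⟨f, hfB, hf, rfl⟩; exact hN f hfB hf⟩ ⟨_, f₀, hf₀B, hf₀, rfl⟩
  exact ⟨f, hfB, hf, fun g hgB hg => hmax _ ⟨g, hgB, hg, rfl⟩⟩

lemma exists_mem_ne_zero_width_min {M : Type*} [AddGroup M] {B : AddSubgroup (ℤ →₀ M)}
    (hB : B ≠ ⊥) : ∃ f ∈ B, f ≠ 0 ∧ ∀ g ∈ B, g ≠ 0 → width f ≤ width g := by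
  obtain ⟨f₀, hf₀B, hf₀⟩ := B.bot_or_exists_ne_zero.resolve_left hB
  obtain ⟨_, ⟨f, hfB, hf, rfl⟩, hmin⟩ :=
    Int.exists_least_of_bdd (P := fun w => ∃ f ∈ B, f ≠ 0 ∧ width f = w)
      ⟨0, by rintro _ ⟨f, -, -, rfl⟩; exact width_nonneg f⟩ ⟨_, f₀, hf₀B, hf₀, rfl⟩
  exact ⟨f, hfB, hf, fun g hgB hg => hmin _ ⟨g, hgB, hg, rfl⟩⟩

lemma S_zpow_apply (i : ℤ) (f : ℤ →₀ ℤ) (j : ℤ) : (i • S) f j = f (j - i) := by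
  induction i using Int.induction_on generalizing f j with
  | zero => simp
  | succ n ih => rw [add_one_zsmul, AddAut.add_apply, ih, S_apply, sub_sub]
  | pred n ih =>
    have h := S_apply ((-S) f) (j + n + 1)
    rw [add_sub_cancel_right, AddAut.apply_neg_self] at h
    rw [sub_one_zsmul, AddAut.add_apply, ih, sub_neg_eq_add, ← h]
    ring_nf

lemma coe_support_S_zpow (i : ℤ) (f : ℤ →₀ ℤ) :
    (((i • S) f).support : Set ℤ) = (· + i) '' f.support := by
  ext j
  simp [Set.image_add_right, S_zpow_apply, sub_eq_add_neg]

lemma width_S_zpow (i : ℤ) (f : ℤ →₀ ℤ) : width ((i • S) f) = width f := by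
  rcases eq_or_ne f 0 with rfl | hf
  · simp
  obtain ⟨m, n, hm, hn⟩ := exists_isLeast_isGreatest_support hf
  have hmono : Monotone (· + i : ℤ → ℤ) := (OrderIso.addRight i).monotone
  rw [width_eq hm hn, width_eq (coe_support_S_zpow i f ▸ hmono.map_isLeast hm)
    (coe_support_S_zpow i f ▸ hmono.map_isGreatest hn)]
  ring

lemma L_apply' (f : ℤ →₀ ℤ) (j : ℤ) : L f j = f j + f (j - 1) := by
  rw [L_def, Finsupp.add_apply, S_apply]

lemma L_pow_succ_apply (k : ℕ) (f : ℤ →₀ ℤ) :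
    (L ^ (k + 1) : AddMonoid.End (ℤ →₀ ℤ)) f = (L ^ k : AddMonoid.End (ℤ →₀ ℤ)) (L f) := by
  rw [pow_succ]; rfl

section L

variable {f : ℤ →₀ ℤ} {m n : ℤ}

lemma isLeast_support_L (h : IsLeast (f.support : Set ℤ) m) :
    IsLeast ((L f).support : Set ℤ) m := by
  have hlt : ∀ j < m, f j = 0 := fun j hj =>
    Finsupp.notMem_support_iff.mp fun hj' => (h.2 hj').not_gt hj
  refine ⟨?_, fun j hj => ?_⟩
  · simpa [L_apply', hlt (m - 1) (by omega)] using h.1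
  · by_contra! hjm
    simp [L_apply', hlt j hjm, hlt (j - 1) (by omega)] at hj

lemma isGreatest_support_L (h : IsGreatest (f.support : Set ℤ) n) :
    IsGreatest ((L f).support : Set ℤ) (n + 1) := by
  have hgt : ∀ j, n < j → f j = 0 := fun j hj =>
    Finsupp.notMem_support_iff.mp fun hj' => (h.2 hj').not_gt hj
  refine ⟨?_, fun j hj => ?_⟩
  · simpa [L_apply', hgt (n + 1) (by omega)] using h.1
  · by_contra! hjn
    simp [L_apply', hgt j (by omega), hgt (j - 1) (by omega)] at hj

lemma isLeast_support_L_pow (k : ℕ) (h : IsLeast (f.support : Set ℤ) m) :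
    IsLeast (((L ^ k : AddMonoid.End (ℤ →₀ ℤ)) f).support : Set ℤ) m := by
  induction k generalizing f with
  | zero => exact h
  | succ k ih => rw [L_pow_succ_apply]; exact ih (isLeast_support_L h)

lemma isGreatest_support_L_pow (k : ℕ) (h : IsGreatest (f.support : Set ℤ) n) :
    IsGreatest (((L ^ k : AddMonoid.End (ℤ →₀ ℤ)) f).support : Set ℤ) (n + k) := by
  induction k generalizing f n with
  | zero => simpa using h
  | succ k ih =>
    rw [L_pow_succ_apply, Nat.cast_succ, add_comm (k : ℤ), ← add_assoc]
    exact ih (isGreatest_support_L h)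

lemma L_pow_apply_ne_zero (k : ℕ) (hf : f ≠ 0) : (L ^ k : AddMonoid.End (ℤ →₀ ℤ)) f ≠ 0 := by
  obtain ⟨m, -, hm, -⟩ := exists_isLeast_isGreatest_support hf
  intro h
  simpa [h] using (isLeast_support_L_pow k hm).1

lemma width_L_pow (k : ℕ) (hf : f ≠ 0) :
    width ((L ^ k : AddMonoid.End (ℤ →₀ ℤ)) f) = width f + k := by
  obtain ⟨m, n, hm, hn⟩ := exists_isLeast_isGreatest_support hf
  rw [width_eq hm hn, width_eq (isLeast_support_L_pow k hm) (isGreatest_support_L_pow k hn)]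
  ring

end L

/-- For a nontrivial finitely generated additive subgroup `B` of `ℤ →₀ ℤ`,
`k ≥ 1` and `i : ℤ`, the image of `B` under `L ^ k` is not contained in the
image of `B` under `S ^ i`, and vice versa. -/
theorem image_L_pow_not_le_image_S_zpow (B : AddSubgroup (ℤ →₀ ℤ))
    (hFG : B.FG) (hB : B ≠ ⊥) (k : ℕ) (hk : 1 ≤ k) (i : ℤ) :
    ¬ (B.map ((L ^ k : AddMonoid.End (ℤ →₀ ℤ)) : (ℤ →₀ ℤ) →+ (ℤ →₀ ℤ)) ≤
        B.map (i • S).toAddMonoidHom) ∧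
    ¬ (B.map (i • S).toAddMonoidHom ≤
        B.map ((L ^ k : AddMonoid.End (ℤ →₀ ℤ)) : (ℤ →₀ ℤ) →+ (ℤ →₀ ℤ))) := by
  constructor
  · intro H
    obtain ⟨f, hfB, hf, hmax⟩ := exists_mem_ne_zero_width_max_of_fg hFG hB
    obtain ⟨c, hcB, hc, hcf⟩ := exists_ne_zero_map_eq_of_map_le H hfB (L_pow_apply_ne_zero k hf)
    have hwidth : width c = width f + k := by
      rw [← width_S_zpow i c, ← width_L_pow k hf]
      exact congrArg width hcf
    have := hmax c hcB hc
    omega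
  · intro H
    obtain ⟨f, hfB, hf, hmin⟩ := exists_mem_ne_zero_width_min hB
    obtain ⟨c, hcB, hc, hcf⟩ := exists_ne_zero_map_eq_of_map_le H hfB
      ((AddEquiv.map_ne_zero_iff _).mpr hf)
    have hwidth : width c + k = width f := by
      rw [← width_S_zpow i f, ← width_L_pow k hc]
      exact congrArg width hcf
    have := hmin c hcB hc
    omega
end
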